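/- arXiv:1208.3046 — 5 statements merged into one kernel-verified Lean document; each statement's English description precedes it below -/
import Mathlib

section
/- Let G be a finite abelian p-group and M a maximal subgroup of G (i.e., a subgroup of index p). Then there exist a subgroup H of G and a nonnegative integer i such that G is isomorphic to H × C_{p^{i+1}} via an isomorphism carrying M onto H × C_{p^i}, where C_{p^i} is the unique subgroup of index p in C_{p^{i+1}}. -/
/-!
Let `φ : G → ℤ/p` be a character with kernel `M`, and let `x ∉ M` have minimal order
`p^(i+1)`. Every element outside `M` then has order divisible by `p^(i+1)`, so in a
decomposition of `G` into cyclic factors, `φ` lifts factor by factor to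
`ρ : G → ℤ/p^(i+1)`. The lift takes a unit value at `x`; rescaled so that `ρ x = 1`, it is
split by `c ↦ x^c`, whence `G ≃ ker ρ × ℤ/p^(i+1)`, and `M = ρ⁻¹(pℤ/p^(i+1))` because both
are the kernel of `φ`.
-/

open Multiplicative

namespace ZMod

@[ext]
theorem addMonoidHom_ext {n : ℕ} {A : Type*} [AddGroup A] {f g : ZMod n →+ A}
    (h : f 1 = g 1) : f = g := by
  ext a
  obtain ⟨k, rfl⟩ := intCast_surjective a
  rw [← zsmul_one, map_zsmul, map_zsmul, h]

theorem exists_castHom_comp_eq {n p q : ℕ} [NeZero p] (hpq : p ∣ q) (f : ZMod n →+ ZMod p)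
    (hf : f 1 ≠ 0 → q ∣ n) :
    ∃ F : ZMod n →+ ZMod q, (castHom hpq (ZMod p)).toAddMonoidHom.comp F = f := by
  by_cases h : f 1 = 0
  · exact ⟨0, by ext; simp [h]⟩
  · refine ⟨(AddMonoidHom.mulLeft ((f 1).val : ZMod q)).comp
      (castHom (hf h) (ZMod q)).toAddMonoidHom, ?_⟩
    ext
    simp only [AddMonoidHom.comp_apply, RingHom.toAddMonoidHom_eq_coe, AddMonoidHom.coe_coe,
      AddMonoidHom.coe_mulLeft, map_one, mul_one]
    rw [map_natCast, natCast_zmod_val]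

theorem mem_zmultiples_natCast_iff {p q : ℕ} (hpq : p ∣ q) (a : ZMod q) :
    a ∈ AddSubgroup.zmultiples (p : ZMod q) ↔ castHom hpq (ZMod p) a = 0 := by
  constructor
  · rintro ⟨m, rfl⟩
    rw [map_zsmul, map_natCast, natCast_self, smul_zero]
  · obtain ⟨k, rfl⟩ := intCast_surjective a
    rw [map_intCast, intCast_zmod_eq_zero_iff_dvd]
    rintro ⟨m, rfl⟩
    exact ⟨m, by push_cast; ring⟩

theorem isUnit_of_castHom_ne_zero {p k : ℕ} (hp : p.Prime) (hk : k ≠ 0) {a : ZMod (p ^ k)}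
    (ha : castHom (dvd_pow_self p hk) (ZMod p) a ≠ 0) : IsUnit a := by
  have : NeZero (p ^ k) := ⟨pow_ne_zero k hp.ne_zero⟩
  rw [← natCast_zmod_val a, isUnit_natCast_iff_not_dvd_pow hp (Nat.pos_of_ne_zero hk),
    ← natCast_eq_zero_iff]
  rwa [castHom_apply, cast_eq_val] at ha

end ZMod

theorem AddCommGroup.exists_castHom_comp_eq {A : Type*} [AddCommGroup A] [Finite A]
    {p q : ℕ} [NeZero p] (hpq : p ∣ q) (f : A →+ ZMod p)
    (hf : ∀ a, f a ≠ 0 → q ∣ addOrderOf a) :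
    ∃ F : A →+ ZMod q, (ZMod.castHom hpq (ZMod p)).toAddMonoidHom.comp F = f := by
  classical
  obtain ⟨ι, _, n, -, ⟨κ⟩⟩ := equiv_directSum_zmod_of_finite' A
  have hfactor (j : ι) : ∃ F : ZMod (n j) →+ ZMod q,
      (ZMod.castHom hpq (ZMod p)).toAddMonoidHom.comp F =
        (f.comp κ.symm.toAddMonoidHom).comp (DirectSum.of _ j) := by
    refine ZMod.exists_castHom_comp_eq hpq _ fun h ↦ ?_
    have := hf (κ.symm (DirectSum.of _ j 1)) h
    rwa [κ.symm.addOrderOf_eq, addOrderOf_injective _ (DirectSum.of_injective j),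
      ZMod.addOrderOf_one] at this
  choose F hF using hfactor
  refine ⟨(DirectSum.toAddMonoid F).comp κ.toAddMonoidHom, ?_⟩
  refine (AddMonoidHom.cancel_right (f := κ.symm.toAddMonoidHom) κ.symm.surjective).mp
    (DirectSum.addHom_ext' fun j ↦ ?_)
  rw [← hF j]
  ext
  simp

theorem Multiplicative.ofAdd_mem_zpowers_ofAdd_iff {A : Type*} [AddGroup A] {a b : A} :
    ofAdd a ∈ Subgroup.zpowers (ofAdd b) ↔ a ∈ AddSubgroup.zmultiples b :=
  Iff.rfl

section Group
variable {G : Type*} [Group G]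

theorem IsPGroup.exists_orderOf_dvd_of_mem {p : ℕ} [hp : Fact p.Prime] [Finite G]
    (hG : IsPGroup p G) {S : Set G} (hS : S.Nonempty) :
    ∃ x ∈ S, ∀ g ∈ S, orderOf x ∣ orderOf g := by
  obtain ⟨x, hxS, hmin⟩ := S.exists_min_image orderOf S.toFinite hS
  refine ⟨x, hxS, fun g hg ↦ ?_⟩
  obtain ⟨k, hk⟩ := IsPGroup.iff_orderOf.mp hG x
  obtain ⟨m, hm⟩ := IsPGroup.iff_orderOf.mp hG g
  have hle := hmin g hg
  rw [hk, hm] at hle ⊢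
  exact pow_dvd_pow p ((Nat.pow_le_pow_iff_right hp.out.one_lt).mp hle)

theorem IsPGroup.card_quotient_of_isCoatom {p : ℕ} [Fact p.Prime] [Finite G]
    (hG : IsPGroup p G) {M : Subgroup G} [M.Normal] (hM : IsCoatom M) : Nat.card (G ⧸ M) = p := by
  have : Nontrivial (G ⧸ M) := QuotientGroup.nontrivial_iff.mpr hM.1
  obtain ⟨b, hb⟩ := exists_prime_orderOf_dvd_card' (G := G ⧸ M) p
    ((hG.to_quotient M).card_eq_or_dvd.resolve_left Finite.one_lt_card.ne')
  have hb1 : b ≠ 1 := fun h ↦ (Fact.out : p.Prime).one_lt.ne' (by rw [← hb, h, orderOf_one])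
  have hmk := QuotientGroup.mk'_surjective M
  have htop : Subgroup.zpowers b = ⊤ := by
    refine Subgroup.comap_injective hmk (hM.2 _ ?_)
    have hker : M = (⊥ : Subgroup (G ⧸ M)).comap (QuotientGroup.mk' M) := by
      rw [MonoidHom.comap_bot, QuotientGroup.ker_mk']
    exact hker.trans_lt <| (Subgroup.comap_lt_comap_of_surjective hmk).mpr
      (bot_lt_iff_ne_bot.mpr (Subgroup.zpowers_ne_bot.mpr hb1))
  rw [← Subgroup.card_top, ← htop, Nat.card_zpowers, hb]

theorem IsPGroup.exists_ker_eq_of_isCoatom {p : ℕ} [Fact p.Prime] [Finite G]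
    (hG : IsPGroup p G) {M : Subgroup G} [M.Normal] (hM : IsCoatom M) :
    ∃ φ : G →* Multiplicative (ZMod p), φ.ker = M := by
  let e := mulEquivOfPrimeCardEq (hG.card_quotient_of_isCoatom hM)
    (by rw [Nat.card_congr toAdd, Nat.card_zmod])
  exact ⟨(e : G ⧸ M →* Multiplicative (ZMod p)).comp (QuotientGroup.mk' M), by
    rw [MonoidHom.ker_mulEquiv_comp, QuotientGroup.ker_mk']⟩

end Group

section CommGroup
variable {G : Type*} [CommGroup G]

def MonoidHom.kerProdEquivOfRightInverse {C : Type*} [Group C] (ρ : G →* C) (σ : C →* G)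
    (hσ : Function.RightInverse σ ρ) : G ≃* ρ.ker × C where
  toFun g := (⟨g * (σ (ρ g))⁻¹, by simp [hσ (ρ g)]⟩, ρ g)
  invFun x := x.1 * σ x.2
  left_inv g := inv_mul_cancel_right g _
  right_inv := by
    rintro ⟨⟨k, hk⟩, c⟩
    rw [MonoidHom.mem_ker] at hk
    have hρ : ρ (k * σ c) = c := by rw [map_mul, hk, one_mul, hσ c]
    ext <;> simp [hρ]
  map_mul' g h := by
    ext
    · change g * h * (σ (ρ (g * h)))⁻¹ = g * (σ (ρ g))⁻¹ * (h * (σ (ρ h))⁻¹)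
      rw [map_mul, map_mul, mul_inv, mul_mul_mul_comm]
    · exact map_mul ρ g h

theorem MonoidHom.exists_rightInverse_of_apply_eq_ofAdd_one {n : ℕ}
    (ρ : G →* Multiplicative (ZMod n)) {x : G} (hx : x ^ n = 1) (hρx : ρ x = ofAdd 1) :
    ∃ σ : Multiplicative (ZMod n) →* G, Function.RightInverse σ ρ := by
  refine ⟨AddMonoidHom.toMultiplicativeLeft
    (ZMod.lift n ⟨zmultiplesHom (Additive G) (Additive.ofMul x), ?_⟩), fun c ↦ ?_⟩
  · simp [← ofMul_pow, hx]
  · obtain ⟨k, hk⟩ := ZMod.intCast_surjective (toAdd c)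
    obtain rfl : ofAdd (k : ZMod n) = c := by rw [hk, ofAdd_toAdd]
    simp [hρx, ← ofAdd_zsmul]

theorem IsPGroup.exists_zmod_hom_of_isCoatom {p : ℕ} [hp : Fact p.Prime] [Finite G]
    (hG : IsPGroup p G) {M : Subgroup G} (hM : IsCoatom M) :
    ∃ (i : ℕ) (x : G) (ρ : G →* Multiplicative (ZMod (p ^ (i + 1)))),
      x ^ p ^ (i + 1) = 1 ∧ ρ x = ofAdd 1 ∧
        ∀ g, g ∈ M ↔ ρ g ∈ Subgroup.zpowers (ofAdd (p : ZMod (p ^ (i + 1)))) := by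
  obtain ⟨φ, rfl⟩ := hG.exists_ker_eq_of_isCoatom hM
  obtain ⟨x, hxM, hxdvd⟩ := hG.exists_orderOf_dvd_of_mem (S := {g | φ g ≠ 1})
    ((SetLike.exists_of_lt hM.1.lt_top).imp fun _ h ↦ h.2)
  obtain ⟨k, hk⟩ := IsPGroup.iff_orderOf.mp hG x
  have hx1 : x ≠ 1 := fun h ↦ hxM (by rw [h, map_one])
  obtain ⟨i, rfl⟩ : ∃ i, k = i + 1 := Nat.exists_eq_add_one.mpr <| Nat.pos_of_ne_zero fun h ↦
    hx1 (orderOf_eq_one_iff.mp (by rw [hk, h, pow_zero]))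
  have hpq : p ∣ p ^ (i + 1) := dvd_pow_self p (Nat.add_one_ne_zero i)
  obtain ⟨F, hF⟩ := AddCommGroup.exists_castHom_comp_eq hpq φ.toAdditiveLeft fun a ha ↦ by
    rw [← ofMul_toMul a, addOrderOf_ofMul_eq_orderOf, ← hk]
    exact hxdvd _ ha
  have hFφ (g : G) : ZMod.castHom hpq (ZMod p) (F (.ofMul g)) = toAdd (φ g) :=
    DFunLike.congr_fun hF (.ofMul g)
  obtain ⟨u, hu⟩ := ZMod.isUnit_of_castHom_ne_zero hp.out (Nat.add_one_ne_zero i)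
    (a := F (.ofMul x)) (by rwa [hFφ, Ne, toAdd_eq_zero])
  refine ⟨i, x, AddMonoidHom.toMultiplicativeRight ((AddMonoidHom.mulLeft ↑u⁻¹).comp F),
    by rw [← hk, pow_orderOf_eq_one], by simp [← hu], fun g ↦ ?_⟩
  simp only [MonoidHom.mem_ker, AddMonoidHom.coe_toMultiplicativeRight,
    AddMonoidHom.coe_comp, AddMonoidHom.coe_mulLeft, Function.comp_apply]
  rw [ofAdd_mem_zpowers_ofAdd_iff, ZMod.mem_zmultiples_natCast_iff hpq, map_mul, mul_eq_zero,
    or_iff_right (u⁻¹.isUnit.map _).ne_zero, hFφ, toAdd_eq_zero]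

end CommGroup

/-- For a finite abelian p-group G and a maximal subgroup M of G, there are a subgroup
H ≤ G and i ≥ 0 with G ≅ H × C_{p^{i+1}} carrying M onto H × C_{p^i}, where C_{p^i}
is the unique index-p subgroup of C_{p^{i+1}} (the subgroup generated by p). -/
theorem stmt_4 (p : ℕ) (hp : p.Prime) (G : Type*) [CommGroup G] [Finite G]
    (hG : IsPGroup p G) (M : Subgroup G) (hM : IsCoatom M) :
    ∃ (H : Subgroup G) (i : ℕ) (e : G ≃* (H × Multiplicative (ZMod (p ^ (i + 1))))),
      ∀ g : G, g ∈ M ↔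
        (e g).2 ∈ Subgroup.zpowers (Multiplicative.ofAdd (p : ZMod (p ^ (i + 1)))) := by
  have : Fact p.Prime := ⟨hp⟩
  obtain ⟨i, x, ρ, hx, hρx, hM⟩ := hG.exists_zmod_hom_of_isCoatom hM
  obtain ⟨σ, hσ⟩ := ρ.exists_rightInverse_of_apply_eq_ofAdd_one hx hρx
  exact ⟨ρ.ker, i, ρ.kerProdEquivOfRightInverse σ hσ, hM⟩
end

section
/- Let A, B, C, D be finite abelian p-groups such that A is isomorphic to a proper subgroup of B and C is isomorphic to a proper subgroup of D. Then |Hom(A, C)| < |Hom(B, D)|. -/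
/-!
The number of homomorphisms between finite abelian groups is symmetric,
`|Hom(X, Y)| = |Hom(Y, X)|`: with `X̂ = Hom(X, ℂˣ)`, transposition `Hom(X, Y) → Hom(Ŷ, X̂)`
is injective because characters separate points, and `X̂ ≅ X`. So for proper subgroups `H < B` and `K < D`
  `|Hom(H, K)| ≤ |Hom(H, D)| = |Hom(D, H)| ≤ |Hom(D, B)| = |Hom(B, D)|`,
and one of the two inequalities is strict as soon as some `H → D` leaves `K` or some `D → B`
leaves `H`. Every `y` with `y ^ exp X = 1` is hit by a homomorphism out of `X` (extend a faithful
character of a cyclic subgroup of order `exp X`). As exponents of `p`-groups are comparable,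
either an element outside `H` is killed by `exp D`, or `H` contains an element of order `exp D`;
in the latter case `exp D ∣ exp H`, so any element outside `K` is killed by `exp H`.
-/

open Monoid Subgroup

instance instFiniteMonoidHom {X Y : Type*} [Monoid X] [Monoid Y] [Finite X] [Finite Y] :
    Finite (X →* Y) :=
  .of_injective _ DFunLike.coe_injective

instance instNeZeroExponentComplex (X : Type*) [CommGroup X] [Finite X] :
    NeZero (exponent X : ℂ) :=
  ⟨Nat.cast_ne_zero.mpr exponent_ne_zero_of_finite⟩

lemma card_monoidHom_le_card_monoidHom_swap (X Y : Type*) [CommGroup X] [CommGroup Y]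
    [Finite X] [Finite Y] : Nat.card (X →* Y) ≤ Nat.card (Y →* X) := by
  obtain ⟨eX⟩ := CommGroup.monoidHom_mulEquiv_of_hasEnoughRootsOfUnity X ℂ
  obtain ⟨eY⟩ := CommGroup.monoidHom_mulEquiv_of_hasEnoughRootsOfUnity Y ℂ
  refine Nat.card_le_card_of_injective
    (fun f => eX.toMonoidHom.comp ((MonoidHom.compHom' f).comp eY.symm.toMonoidHom))
    fun f g hfg => MonoidHom.ext fun x => ?_
  rw [← CommGroup.forall_apply_eq_apply_iff Y (M := ℂ)]
  intro χ
  have := DFunLike.congr_fun hfg (eY χ)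
  simpa using DFunLike.congr_fun (eX.injective this) x

theorem card_monoidHom_comm (X Y : Type*) [CommGroup X] [CommGroup Y] [Finite X] [Finite Y] :
    Nat.card (X →* Y) = Nat.card (Y →* X) :=
  (card_monoidHom_le_card_monoidHom_swap X Y).antisymm (card_monoidHom_le_card_monoidHom_swap Y X)

def monoidHomSubgroupEquiv (X : Type*) {Y : Type*} [Group X] [Group Y] (K : Subgroup Y) :
    (X →* K) ≃ {f : X →* Y // f.range ≤ K} where
  toFun φ := ⟨K.subtype.comp φ, by rintro _ ⟨x, rfl⟩; exact (φ x).2⟩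
  invFun f := f.1.codRestrict K fun x => f.2 ⟨x, rfl⟩
  left_inv φ := by ext; rfl
  right_inv f := by ext; rfl

lemma card_monoidHom_subgroup_le (X : Type*) {Y : Type*} [Group X] [Group Y] [Finite X]
    [Finite Y] (K : Subgroup Y) : Nat.card (X →* K) ≤ Nat.card (X →* Y) :=
  Nat.card_congr (monoidHomSubgroupEquiv X K) ▸ Finite.card_subtype_le _

lemma card_monoidHom_subgroup_lt {X Y : Type*} [Group X] [Group Y] [Finite X] [Finite Y]
    {K : Subgroup Y} {f : X →* Y} (hf : ¬ f.range ≤ K) :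
    Nat.card (X →* K) < Nat.card (X →* Y) :=
  Nat.card_congr (monoidHomSubgroupEquiv X K) ▸ Finite.card_subtype_lt hf

lemma Subgroup.forall_mem_zpowers_mk_self {G : Type*} [Group G] (g : G) :
    ∀ z : zpowers g, z ∈ zpowers (⟨g, mem_zpowers g⟩ : zpowers g) := by
  rintro ⟨z, k, rfl⟩
  exact ⟨k, Subtype.ext (by simp)⟩

theorem exists_monoidHom_apply_eq {X Y : Type*} [CommGroup X] [Finite X] [Group Y] {y : Y}
    (hy : y ^ exponent X = 1) : ∃ (f : X →* Y) (x : X), f x = y := by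
  obtain ⟨x, hx⟩ := exists_orderOf_eq_exponent (G := X) ExponentExists.of_finite
  obtain ⟨ζ, hζ⟩ := HasEnoughRootsOfUnity.exists_primitiveRoot ℂ (exponent X)
  obtain ⟨u, rfl⟩ := hζ.isUnit exponent_ne_zero_of_finite
  rw [IsPrimitiveRoot.coe_units_iff] at hζ
  have hu : orderOf u = exponent X := hζ.eq_orderOf.symm
  obtain ⟨χ, hχ⟩ := MonoidHom.domRestrict_surjective ℂ (zpowers x)
    (monoidHomOfForallMemZpowers (forall_mem_zpowers_mk_self x) (g' := u) (by simp [hu, hx]))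
  have hχx : χ x = u := by
    simpa using DFunLike.congr_fun hχ ⟨x, mem_zpowers x⟩
  have hχ_mem : ∀ g, χ g ∈ zpowers u := fun g => by
    rw [hζ.zpowers_eq, mem_rootsOfUnity, ← map_pow, Monoid.pow_exponent_eq_one, map_one]
  let φ : zpowers u →* Y :=
    monoidHomOfForallMemZpowers (forall_mem_zpowers_mk_self u) (g' := y)
      (by rw [orderOf_mk, hu]; exact orderOf_dvd_of_pow_eq_one hy)
  refine ⟨φ.comp (χ.codRestrict _ hχ_mem), x, ?_⟩
  simp [φ, hχx]

lemma exists_monoidHom_range_not_le {X Y : Type*} [CommGroup X] [Finite X] [Group Y]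
    {K : Subgroup Y} {y : Y} (hyK : y ∉ K) (hy : y ^ exponent X = 1) :
    ∃ f : X →* Y, ¬ f.range ≤ K := by
  obtain ⟨f, x, rfl⟩ := exists_monoidHom_apply_eq hy
  exact ⟨f, fun h => hyK (h ⟨x, rfl⟩)⟩

lemma exists_orderOf_eq_of_dvd_exponent {G : Type*} [CommGroup G] [Finite G] {n : ℕ}
    (hn : n ∣ exponent G) : ∃ g : G, orderOf g = n := by
  obtain ⟨g, hg⟩ := exists_orderOf_eq_exponent (G := G) ExponentExists.of_finite
  exact ⟨g ^ (orderOf g / n), orderOf_pow_orderOf_div (hg ▸ exponent_ne_zero_of_finite) (hg ▸ hn)⟩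

lemma IsPGroup.exponent_dvd_or_dvd {p : ℕ} [Fact p.Prime] {G G' : Type*} [Group G] [Group G']
    [Finite G] [Finite G'] (hG : IsPGroup p G) (hG' : IsPGroup p G') :
    exponent G ∣ exponent G' ∨ exponent G' ∣ exponent G := by
  obtain ⟨m, hm⟩ := hG.exists_exponent_eq_pow
  obtain ⟨n, hn⟩ := hG'.exists_exponent_eq_pow
  rw [hm, hn]
  exact (le_total m n).imp (pow_dvd_pow p) (pow_dvd_pow p)

theorem exists_monoidHom_range_not_le_or {p : ℕ} [Fact p.Prime] {B D : Type*}
    [CommGroup B] [CommGroup D] [Finite B] [Finite D] (hB : IsPGroup p B) (hD : IsPGroup p D)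
    {H : Subgroup B} {K : Subgroup D} (hH : H ≠ ⊤) (hK : K ≠ ⊤) :
    (∃ f : H →* D, ¬ f.range ≤ K) ∨ ∃ g : D →* B, ¬ g.range ≤ H := by
  obtain ⟨b, hb⟩ := SetLike.exists_not_mem_of_ne_top H hH
  obtain ⟨d, hd⟩ := SetLike.exists_not_mem_of_ne_top K hK
  rcases hB.exponent_dvd_or_dvd hD with hBD | hDB
  · exact .inr (exists_monoidHom_range_not_le hb (exponent_dvd_iff_forall_pow_eq_one.mp hBD b))
  obtain ⟨c, hc⟩ := exists_orderOf_eq_of_dvd_exponent hDB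
  by_cases hcH : c ∈ H
  · have hDH : exponent D ∣ exponent H := hc ▸ orderOf_mk c hcH ▸ order_dvd_exponent _
    exact .inl (exists_monoidHom_range_not_le hd (exponent_dvd_iff_forall_pow_eq_one.mp hDH d))
  · exact .inr (exists_monoidHom_range_not_le hcH (hc ▸ pow_orderOf_eq_one c))

theorem card_monoidHom_subgroup_lt_of_ne_top {p : ℕ} [Fact p.Prime] {B D : Type*}
    [CommGroup B] [CommGroup D] [Finite B] [Finite D] (hB : IsPGroup p B) (hD : IsPGroup p D)
    {H : Subgroup B} {K : Subgroup D} (hH : H ≠ ⊤) (hK : K ≠ ⊤) :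
    Nat.card (H →* K) < Nat.card (B →* D) := by
  rcases exists_monoidHom_range_not_le_or hB hD hH hK with ⟨f, hf⟩ | ⟨g, hg⟩
  · calc Nat.card (H →* K) < Nat.card (H →* D) := card_monoidHom_subgroup_lt hf
      _ = Nat.card (D →* H) := card_monoidHom_comm _ _
      _ ≤ Nat.card (D →* B) := card_monoidHom_subgroup_le _ _
      _ = Nat.card (B →* D) := card_monoidHom_comm _ _
  · calc Nat.card (H →* K) ≤ Nat.card (H →* D) := card_monoidHom_subgroup_le _ _
      _ = Nat.card (D →* H) := card_monoidHom_comm _ _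
      _ < Nat.card (D →* B) := card_monoidHom_subgroup_lt hg
      _ = Nat.card (B →* D) := card_monoidHom_comm _ _

theorem stmt_5_general (p : ℕ) (hp : p.Prime)
    (A B C D : Type*) [CommGroup A] [CommGroup B] [CommGroup C] [CommGroup D]
    [Finite B] [Finite D]
    (hB : IsPGroup p B) (hD : IsPGroup p D)
    (hAB : ∃ B' : Subgroup B, B' ≠ ⊤ ∧ Nonempty (A ≃* B'))
    (hCD : ∃ D' : Subgroup D, D' ≠ ⊤ ∧ Nonempty (C ≃* D')) :
    Nat.card (A →* C) < Nat.card (B →* D) := by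
  obtain ⟨B', hB', ⟨eA⟩⟩ := hAB
  obtain ⟨D', hD', ⟨eC⟩⟩ := hCD
  have := Fact.mk hp
  calc Nat.card (A →* C) = Nat.card (B' →* D') :=
        Nat.card_congr (eA.monoidHomCongrLeftEquiv.trans eC.monoidHomCongrRightEquiv)
    _ < Nat.card (B →* D) := card_monoidHom_subgroup_lt_of_ne_top hB hD hB' hD'

/-- If A, B, C, D are finite abelian p-groups, A is isomorphic to a proper subgroup of B
and C is isomorphic to a proper subgroup of D, then |Hom(A, C)| < |Hom(B, D)|. -/
theorem stmt_5 (p : ℕ) (hp : p.Prime)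
    (A B C D : Type*) [CommGroup A] [CommGroup B] [CommGroup C] [CommGroup D]
    [Finite A] [Finite B] [Finite C] [Finite D]
    (hA : IsPGroup p A) (hB : IsPGroup p B) (hC : IsPGroup p C) (hD : IsPGroup p D)
    (hAB : ∃ B' : Subgroup B, B' ≠ ⊤ ∧ Nonempty (A ≃* B'))
    (hCD : ∃ D' : Subgroup D, D' ≠ ⊤ ∧ Nonempty (C ≃* D')) :
    Nat.card (A →* C) < Nat.card (B →* D) :=
  stmt_5_general p hp A B C D hB hD hAB hCD
end

section
/- Let G be a finite nilpotent group of class 2. For each class-preserving automorphism φ of G, the map f_φ : G/Z(G) → γ₂(G) sending gZ(G) to g⁻¹φ(g) is a well-defined group homomorphism, and φ ↦ f_φ is an injective group homomorphism from Aut_c(G) into Hom(G/Z(G), γ₂(G)). In particular |Aut_c(G)| ≤ |Hom(G/Z(G), γ₂(G))|. -/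
/-!
A class-preserving `φ` sends `g` to some `c g c⁻¹`, so `g⁻¹ φ(g) = ⁅g⁻¹, c⁆` lies in
`γ₂(G) ≤ Z(G)`. Centrality of these displacements makes `g ↦ g⁻¹ φ(g)` multiplicative, and `φ`
fixes `Z(G)` pointwise (a central element is alone in its conjugacy class), so the map factors
through `G/Z(G)`. Since `φ(g) = g · f_φ(g)`, `φ` is determined by `f_φ`.
-/

/-- The subgroup of class-preserving automorphisms of `G`. -/
def classPreservingAuts (G : Type*) [Group G] : Subgroup (MulAut G) where
  carrier := {φ | ∀ x : G, IsConj x (φ x)}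
  one_mem' := by intro x; simpa using IsConj.refl x
  mul_mem' := by
    intro a b ha hb x
    simpa [MulAut.mul_apply] using (hb x).trans (ha (b x))
  inv_mem' := by
    intro a ha x
    have h := ha (a⁻¹ x)
    have hax : a (a⁻¹ x) = x := by
      simpa using a.apply_symm_apply x
    rw [hax] at h
    exact h.symm

open scoped IsMulCommutative

section

open Subgroup

open scoped commutatorElement

variable {G : Type*} [Group G]

theorem IsConj.inv_mul_mem_commutator {g h : G} (hgh : IsConj g h) : g⁻¹ * h ∈ commutator G := by
  obtain ⟨c, rfl⟩ := isConj_iff.mp hgh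
  have : g⁻¹ * (c * g * c⁻¹) = ⁅g⁻¹, c⁆ := by rw [commutatorElement_def]; group
  rw [this]
  exact commutator_mem_commutator (mem_top g⁻¹) (mem_top c)

def MonoidHom.centralDisplacement (φ : G →* G) (hφ : ∀ g, g⁻¹ * φ g ∈ center G) :
    G →* center G where
  toFun g := ⟨g⁻¹ * φ g, hφ g⟩
  map_one' := by ext; simp
  map_mul' g h := by
    ext
    have hcomm : h⁻¹ * (g⁻¹ * φ g) = g⁻¹ * φ g * h⁻¹ := mem_center_iff.mp (hφ g) h⁻¹
    simp only [map_mul, mul_inv_rev, Subgroup.coe_mul]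
    calc h⁻¹ * g⁻¹ * (φ g * φ h) = h⁻¹ * (g⁻¹ * φ g) * φ h := by group
      _ = g⁻¹ * φ g * (h⁻¹ * φ h) := by rw [hcomm]; group

namespace classPreservingAuts

theorem inv_mul_apply_mem_commutator (φ : classPreservingAuts G) (g : G) :
    g⁻¹ * (φ : MulAut G) g ∈ commutator G :=
  (φ.2 g).inv_mul_mem_commutator

theorem apply_eq_of_mem_center (φ : classPreservingAuts G) {z : G} (hz : z ∈ center G) :
    (φ : MulAut G) z = z :=
  ((φ.2 z).eq_of_left_mem_center (by rwa [← coe_center])).symm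

variable (hG : commutator G ≤ center G)

/-- The homomorphism `f_φ : gZ(G) ↦ g⁻¹ φ(g)`. -/
def displacement (φ : classPreservingAuts G) : G ⧸ center G →* center G :=
  QuotientGroup.lift (center G)
    ((φ : MulAut G).toMonoidHom.centralDisplacement fun g =>
      hG (inv_mul_apply_mem_commutator φ g))
    fun z hz => by ext; simp [MonoidHom.centralDisplacement, apply_eq_of_mem_center φ hz]

@[simp]
theorem coe_displacement_mk (φ : classPreservingAuts G) (g : G) :
    (displacement hG φ g : G) = g⁻¹ * (φ : MulAut G) g :=
  rfl

theorem displacement_mem_commutator (φ : classPreservingAuts G) (q : G ⧸ center G) :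
    (displacement hG φ q : G) ∈ commutator G := by
  induction q using QuotientGroup.induction_on with
  | H g => exact inv_mul_apply_mem_commutator φ g

/-- `φ ↦ f_φ` is a homomorphism because `f_ψ` is central, hence fixed by `φ`:
`g⁻¹ φ(ψ g) = g⁻¹ φ(g f_ψ(g)) = f_φ(g) f_ψ(g)`. -/
def displacementHom : classPreservingAuts G →* (G ⧸ center G →* center G) where
  toFun := displacement hG
  map_one' := by ext g; simp
  map_mul' φ ψ := by
    ext g
    have hψ : g⁻¹ * (ψ : MulAut G) g ∈ center G := hG (inv_mul_apply_mem_commutator ψ g)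
    calc g⁻¹ * (φ : MulAut G) ((ψ : MulAut G) g)
        = g⁻¹ * (φ : MulAut G) (g * (g⁻¹ * (ψ : MulAut G) g)) := by group
      _ = g⁻¹ * (φ : MulAut G) g * (g⁻¹ * (ψ : MulAut G) g) := by
        rw [map_mul, apply_eq_of_mem_center φ hψ, mul_assoc]

theorem displacementHom_injective : Function.Injective (displacementHom hG) := by
  intro φ ψ h
  ext g
  exact mul_left_cancel (congrArg (fun f => (f g : G)) h)

end classPreservingAuts

end

/-- For a finite group G of class 2, the map φ ↦ f_φ, f_φ(gZ(G)) = g⁻¹φ(g), is a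
well-defined injective homomorphism from Aut_c(G) into Hom(G/Z(G), γ₂(G)); in
particular |Aut_c(G)| ≤ |Hom(G/Z(G), γ₂(G))|. (Here homomorphisms whose values lie
in γ₂(G) ≤ Z(G) are recorded as homomorphisms into Z(G) with image in γ₂(G).) -/
theorem stmt_8 (G : Type*) [Group G] [Finite G]
    (h2 : commutator G ≤ Subgroup.center G) :
    ∃ F : classPreservingAuts G →* ((G ⧸ Subgroup.center G) →* Subgroup.center G),
      Function.Injective F ∧
      (∀ (φ : classPreservingAuts G) (g : G),
        ((F φ (QuotientGroup.mk g) : Subgroup.center G) : G) = g⁻¹ * (φ : MulAut G) g) ∧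
      (∀ (φ : classPreservingAuts G) (q : G ⧸ Subgroup.center G),
        ((F φ q : Subgroup.center G) : G) ∈ commutator G) ∧
      Nat.card (classPreservingAuts G) ≤
        Nat.card {f : (G ⧸ Subgroup.center G) →* Subgroup.center G //
          ∀ q, ((f q : Subgroup.center G) : G) ∈ commutator G} := by
  open classPreservingAuts in
  refine ⟨displacementHom h2, displacementHom_injective h2, fun _ _ => rfl,
    displacement_mem_commutator h2, ?_⟩
  have : Finite (G ⧸ Subgroup.center G →* Subgroup.center G) :=
    Finite.of_injective _ DFunLike.coe_injective
  exact Nat.card_le_card_of_injective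
    (fun φ => ⟨displacement h2 φ, displacement_mem_commutator h2 φ⟩)
    fun φ ψ h => displacementHom_injective h2 (congrArg Subtype.val h)
end

section
/- Let G be a finite p-group of nilpotency class 2 such that γ₂(G) ≅ C_{p^m} × C_{p^m} for some positive integer m. Then G/Z(G) has a direct factor isomorphic to C_{p^m} × C_{p^m} × C_{p^m}; i.e., G/Z(G) ≅ C_{p^m} × C_{p^m} × C_{p^m} × H for some abelian group H. -/
/-!
Put `V = G/Z(G)`, `n = p^m` and `r = p^(m-1)`. In class 2 the commutator is biadditive and only
depends on classes modulo `Z(G)`, so `V` has exponent dividing `n` and is a `ZMod n`-module.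
If for some `a, b ∈ G` every `r`-th power in `V` lay in the subgroup generated by the `r`-th powers
of `aZ(G)` and `bZ(G)`, biadditivity would put every `[x, y]^r` into the cyclic group generated by
`[a, b]^r`; the `r`-th powers of `γ₂(G) ≅ C_n × C_n` do not lie in a cyclic group. Hence there are
`u, v, w ∈ V` whose `r`-th powers are independent over `𝔽_p`, so `u, v, w` span a copy of
`(ZMod n)^3`, and this copy is a direct summand because `ZMod n` is self-injective.
-/

open Subgroup commutatorElement

theorem ZMod.dvd_of_forall_mul_eq_zero {n : ℕ} [NeZero n] {a b : ZMod n}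
    (h : ∀ s : ZMod n, s * a = 0 → s * b = 0) : a ∣ b := by
  set d := a.val.gcd n
  have hd : d ∣ n := Nat.gcd_dvd_right _ _
  have hkill : ((n / d : ℕ) : ZMod n) * a = 0 := by
    rw [← ZMod.natCast_zmod_val a, ← Nat.cast_mul, ZMod.natCast_eq_zero_iff,
      Nat.div_mul_right_comm hd, Nat.mul_div_assoc _ (Nat.gcd_dvd_left _ _)]
    exact dvd_mul_right _ _
  have hdb : d ∣ b.val := by
    have hpos : 0 < n / d := Nat.div_pos (Nat.le_of_dvd (NeZero.pos n) hd)
      (Nat.gcd_pos_of_pos_right _ (NeZero.pos n))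
    have := h _ hkill
    rw [← ZMod.natCast_zmod_val b, ← Nat.cast_mul, ZMod.natCast_eq_zero_iff] at this
    exact Nat.dvd_of_mul_dvd_mul_left hpos (by rwa [Nat.div_mul_cancel hd])
  refine ⟨a⁻¹ * (b.val / d : ℕ), ?_⟩
  rw [← mul_assoc, ZMod.mul_inv_eq_gcd, ← Nat.cast_mul, Nat.mul_div_cancel' hdb,
    ZMod.natCast_zmod_val]

theorem ZMod.baer_self (n : ℕ) [NeZero n] : Module.Baer (ZMod n) (ZMod n) := by
  have : IsPrincipalIdealRing (ZMod n) :=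
    .of_surjective (Int.castRingHom (ZMod n)) ZMod.intCast_surjective
  intro I g
  obtain ⟨a, rfl⟩ := (IsPrincipalIdealRing.principal I).principal
  have ha : a ∈ Ideal.span {a} := Ideal.mem_span_singleton_self a
  obtain ⟨c, hc⟩ : a ∣ g ⟨a, ha⟩ := ZMod.dvd_of_forall_mul_eq_zero fun s hs => by
    rw [← smul_eq_mul, ← map_smul, show s • (⟨a, ha⟩ : Ideal.span {a}) = 0 from Subtype.ext hs,
      map_zero]
  refine ⟨LinearMap.toSpanSingleton _ _ c, fun x hx => ?_⟩
  obtain ⟨s, rfl⟩ := Ideal.mem_span_singleton'.mp hx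
  have : (⟨s * a, hx⟩ : Ideal.span {a}) = s • ⟨a, ha⟩ := rfl
  rw [this, map_smul, hc, LinearMap.toSpanSingleton_apply, smul_eq_mul, smul_eq_mul]
  ring

theorem Module.Baer.prod {R M N : Type*} [Ring R] [AddCommGroup M] [AddCommGroup N]
    [Module R M] [Module R N] (hM : Module.Baer R M) (hN : Module.Baer R N) :
    Module.Baer R (M × N) := by
  intro I g
  obtain ⟨g₁, hg₁⟩ := hM I (LinearMap.fst R M N ∘ₗ g)
  obtain ⟨g₂, hg₂⟩ := hN I (LinearMap.snd R M N ∘ₗ g)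
  exact ⟨g₁.prod g₂, fun x hx => Prod.ext (hg₁ x hx) (hg₂ x hx)⟩

theorem Module.Baer.exists_linearEquiv_prod {R Q M : Type*} [Ring R] [AddCommGroup Q]
    [AddCommGroup M] [Module R Q] [Module R M] (hQ : Module.Baer R Q) {i : Q →ₗ[R] M}
    (hi : Function.Injective i) : ∃ H : Submodule R M, Nonempty (M ≃ₗ[R] Q × H) := by
  obtain ⟨ρ, hρ⟩ := hQ.extension_property i hi LinearMap.id
  let e := LinearEquiv.ofInjective i hi
  have hcompl : IsCompl (LinearMap.range i) (LinearMap.ker (e.toLinearMap ∘ₗ ρ)) :=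
    LinearMap.isCompl_of_proj fun ⟨_, q, hq⟩ => by
      subst hq
      simp only [LinearMap.comp_apply, ← LinearMap.comp_apply ρ i, hρ, LinearMap.id_apply]
      rfl
  exact ⟨_, ⟨(Submodule.prodEquivOfIsCompl _ _ hcompl).symm ≪≫ₗ e.symm.prodCongr (.refl _ _)⟩⟩

theorem ZMod.exists_nsmul_add_nsmul_of_mem_span_pair {n : ℕ} [NeZero n] {M : Type*}
    [AddCommGroup M] [Module (ZMod n) M] {x y z : M} (h : z ∈ Submodule.span (ZMod n) {x, y}) :
    ∃ k l : ℕ, k • x + l • y = z := by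
  obtain ⟨a, b, rfl⟩ := Submodule.mem_span_pair.mp h
  exact ⟨a.val, b.val, by rw [← Nat.cast_smul_eq_nsmul (ZMod n), ← Nat.cast_smul_eq_nsmul (ZMod n),
    ZMod.natCast_zmod_val, ZMod.natCast_zmod_val]⟩

section PrimePow
variable {p m : ℕ} [Fact p.Prime]

theorem ZMod.exists_eq_mul_of_not_isUnit {c : ZMod (p ^ m)} (hc : ¬IsUnit c) :
    ∃ z, c = p * z := by
  obtain ⟨z, hz⟩ : p ∣ c.val := by
    by_contra h
    refine hc (ZMod.natCast_zmod_val c ▸ (ZMod.isUnit_iff_coprime _ _).mpr ?_)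
    exact Nat.Coprime.pow_right _ ((Fact.out : p.Prime).coprime_iff_not_dvd.mpr h).symm
  exact ⟨z, by rw [← ZMod.natCast_zmod_val c, hz, Nat.cast_mul]⟩

variable {M : Type*} [AddCommGroup M] [Module (ZMod (p ^ m)) M]

theorem smul_pow_pred_nsmul_eq_zero_of_not_isUnit {c : ZMod (p ^ m)} (hc : ¬IsUnit c) (x : M) :
    c • p ^ (m - 1) • x = 0 := by
  obtain ⟨z, rfl⟩ := ZMod.exists_eq_mul_of_not_isUnit hc
  have : ((p ^ (m - 1) * p : ℕ) : ZMod (p ^ m)) = 0 :=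
    (ZMod.natCast_eq_zero_iff _ _).mpr (pow_succ p _ ▸ Nat.pow_dvd_pow p (by omega))
  rw [← Nat.cast_smul_eq_nsmul (ZMod (p ^ m)), smul_smul, mul_comm, ← mul_assoc, ← Nat.cast_mul,
    this, zero_mul, zero_smul]

variable {u v w : M}

theorem not_isUnit_of_smul_add_smul_add_smul_eq_zero (hu : p ^ (m - 1) • u ≠ 0)
    (hv : p ^ (m - 1) • v ∉ Submodule.span (ZMod (p ^ m)) {p ^ (m - 1) • u})
    (hw : p ^ (m - 1) • w ∉ Submodule.span (ZMod (p ^ m)) {p ^ (m - 1) • u, p ^ (m - 1) • v})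
    {a b c : ZMod (p ^ m)}
    (h : a • p ^ (m - 1) • u + (b • p ^ (m - 1) • v + c • p ^ (m - 1) • w) = 0) :
    ¬IsUnit a ∧ ¬IsUnit b ∧ ¬IsUnit c := by
  have hc : ¬IsUnit c := fun hc => hw <| (Submodule.smul_mem_iff_of_isUnit _ hc).mp <| by
    rw [← add_assoc, add_eq_zero_iff_neg_eq'] at h
    rw [neg_eq_iff_eq_neg.mp h]
    exact neg_mem (add_mem (Submodule.smul_mem _ _ (Submodule.subset_span (by simp)))
      (Submodule.smul_mem _ _ (Submodule.subset_span (by simp))))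
  rw [smul_pow_pred_nsmul_eq_zero_of_not_isUnit hc, add_zero] at h
  have hb : ¬IsUnit b := fun hb => hv <| (Submodule.smul_mem_iff_of_isUnit _ hb).mp <| by
    rw [add_eq_zero_iff_neg_eq'] at h
    rw [neg_eq_iff_eq_neg.mp h]
    exact neg_mem (Submodule.smul_mem _ _ (Submodule.mem_span_singleton_self _))
  rw [smul_pow_pred_nsmul_eq_zero_of_not_isUnit hb, add_zero] at h
  exact ⟨fun ha => hu (ha.smul_eq_zero.mp h), hb, hc⟩

theorem injective_coprod_toSpanSingleton (hu : p ^ (m - 1) • u ≠ 0)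
    (hv : p ^ (m - 1) • v ∉ Submodule.span (ZMod (p ^ m)) {p ^ (m - 1) • u})
    (hw : p ^ (m - 1) • w ∉ Submodule.span (ZMod (p ^ m)) {p ^ (m - 1) • u, p ^ (m - 1) • v}) :
    Function.Injective ((LinearMap.toSpanSingleton (ZMod (p ^ m)) M u).coprod
      ((LinearMap.toSpanSingleton _ _ v).coprod (LinearMap.toSpanSingleton _ _ w))) := by
  set f := (LinearMap.toSpanSingleton (ZMod (p ^ m)) M u).coprod
      ((LinearMap.toSpanSingleton _ _ v).coprod (LinearMap.toSpanSingleton _ _ w))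
  have divisible : ∀ y, f (p ^ (m - 1) • y) = 0 → ∃ z, y = (p : ZMod (p ^ m)) • z := by
    rintro ⟨a, b, c⟩ hy
    rw [map_nsmul] at hy
    change p ^ (m - 1) • (a • u + (b • v + c • w)) = 0 at hy
    rw [nsmul_add, nsmul_add, smul_comm _ a, smul_comm _ b, smul_comm _ c] at hy
    obtain ⟨ha, hb, hc⟩ := not_isUnit_of_smul_add_smul_add_smul_eq_zero hu hv hw hy
    obtain ⟨a', rfl⟩ := ZMod.exists_eq_mul_of_not_isUnit ha
    obtain ⟨b', rfl⟩ := ZMod.exists_eq_mul_of_not_isUnit hb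
    obtain ⟨c', rfl⟩ := ZMod.exists_eq_mul_of_not_isUnit hc
    exact ⟨(a', b', c'), rfl⟩
  have pow_dvd : ∀ y, f y = 0 → ∀ j ≤ m, ∃ z, y = p ^ j • z := by
    intro y hy j
    induction j with
    | zero => exact fun _ => ⟨y, (one_nsmul y).symm⟩
    | succ j ih =>
      intro hj
      obtain ⟨z, rfl⟩ := ih (by omega)
      obtain ⟨z', rfl⟩ := divisible z (by
        rw [show m - 1 = j + (m - 1 - j) by omega, pow_add, mul_nsmul, map_nsmul, hy, nsmul_zero])
      exact ⟨z', by rw [Nat.cast_smul_eq_nsmul, ← mul_nsmul, pow_succ']⟩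
  refine (injective_iff_map_eq_zero f).mpr fun y hy => ?_
  obtain ⟨z, rfl⟩ := pow_dvd y hy m le_rfl
  exact ZModModule.char_nsmul_eq_zero _ z

theorem exists_linearEquiv_zmod_cube_prod
    (h : ∀ x y : M, ∃ z : M,
      p ^ (m - 1) • z ∉ Submodule.span (ZMod (p ^ m)) {p ^ (m - 1) • x, p ^ (m - 1) • y}) :
    ∃ H : Submodule (ZMod (p ^ m)) M,
      Nonempty (M ≃ₗ[ZMod (p ^ m)] ZMod (p ^ m) × ZMod (p ^ m) × ZMod (p ^ m) × H) := by
  obtain ⟨u, hu⟩ := h 0 0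
  obtain ⟨v, hv⟩ := h u u
  obtain ⟨w, hw⟩ := h u v
  rw [Set.pair_eq_singleton] at hv
  have hu : p ^ (m - 1) • u ≠ 0 := fun h0 => hu (by rw [h0]; exact zero_mem _)
  have : NeZero (p ^ m) := ⟨pow_ne_zero _ (Fact.out : p.Prime).ne_zero⟩
  have hbaer := (ZMod.baer_self (p ^ m)).prod ((ZMod.baer_self _).prod (ZMod.baer_self _))
  obtain ⟨H, ⟨e⟩⟩ := hbaer.exists_linearEquiv_prod (injective_coprod_toSpanSingleton hu hv hw)
  exact ⟨H, ⟨e ≪≫ₗ .prodAssoc _ _ _ _ ≪≫ₗ (LinearEquiv.refl _ _).prodCongr (.prodAssoc _ _ _ _)⟩⟩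

end PrimePow

section ClassTwo
variable {G : Type*} [Group G]

theorem commutatorElement_eq_of_mk_eq_left {x y : G} (h : (x : G ⧸ center G) = y) (g : G) :
    ⁅x, g⁆ = ⁅y, g⁆ := by
  have hz := mem_center_iff.mp (QuotientGroup.eq.mp h) g
  rw [← mul_inv_cancel_left x y, commutatorElement_mul_left_eq_conj_mul,
    commutatorElement_eq_one_iff_commute.mpr hz.symm, mul_one, mul_inv_cancel, one_mul]

theorem commutatorElement_eq_of_mk_eq_right {x y : G} (h : (x : G ⧸ center G) = y) (g : G) :
    ⁅g, x⁆ = ⁅g, y⁆ := by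
  rw [← commutatorElement_inv, commutatorElement_eq_of_mk_eq_left h, commutatorElement_inv]

theorem commutatorElement_mem_center_of_le_center (hc : commutator G ≤ center G) (a b : G) :
    ⁅a, b⁆ ∈ center G :=
  hc (commutator_mem_commutator (mem_top a) (mem_top b))

theorem commutatorElement_mul_left_of_le_center (hc : commutator G ≤ center G) (a b c : G) :
    ⁅a * b, c⁆ = ⁅a, c⁆ * ⁅b, c⁆ := by
  have h := mem_center_iff.mp (commutatorElement_mem_center_of_le_center hc b c)
  rw [commutatorElement_mul_left_eq_conj_mul, h a, mul_inv_cancel_right, h]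

theorem commutatorElement_mul_right_of_le_center (hc : commutator G ≤ center G) (a b c : G) :
    ⁅a, b * c⁆ = ⁅a, b⁆ * ⁅a, c⁆ := by
  have h := mem_center_iff.mp (commutatorElement_mem_center_of_le_center hc a c)
  rw [commutatorElement_mul_right_eq_mul_conj, mul_assoc _ b, h b, ← mul_assoc,
    mul_inv_cancel_right]

theorem commutatorElement_pow_left_of_le_center (hc : commutator G ≤ center G) (a b : G)
    (n : ℕ) : ⁅a ^ n, b⁆ = ⁅a, b⁆ ^ n := by
  induction n with
  | zero => simp
  | succ n ih => rw [pow_succ, commutatorElement_mul_left_of_le_center hc, ih, pow_succ]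

theorem commutatorElement_pow_right_of_le_center (hc : commutator G ≤ center G) (a b : G)
    (n : ℕ) : ⁅a, b ^ n⁆ = ⁅a, b⁆ ^ n := by
  induction n with
  | zero => simp
  | succ n ih => rw [pow_succ, commutatorElement_mul_right_of_le_center hc, ih, pow_succ]

theorem pow_eq_one_of_commutator_pow_eq_one (hc : commutator G ≤ center G) {n : ℕ}
    (h : ∀ g ∈ commutator G, g ^ n = 1) (x : G ⧸ center G) : x ^ n = 1 := by
  obtain ⟨a, rfl⟩ := QuotientGroup.mk_surjective x
  rw [← QuotientGroup.mk_pow, QuotientGroup.eq_one_iff]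
  refine mem_center_iff.mpr fun g => Eq.symm <| commutatorElement_eq_one_iff_commute.mp ?_
  rw [commutatorElement_pow_left_of_le_center hc,
    h _ (commutator_mem_commutator (mem_top a) (mem_top g))]

theorem pow_mem_zpowers_of_mem_commutator (hc : commutator G ≤ center G) {r : ℕ} {c : G}
    (h : ∀ x y : G, ⁅x, y⁆ ^ r ∈ zpowers c) {g : G} (hg : g ∈ commutator G) :
    g ^ r ∈ zpowers c := by
  rw [commutator_eq_closure] at hg
  induction hg using closure_induction with
  | mem x hx => obtain ⟨a, b, rfl⟩ := hx; exact h a b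
  | one => simp
  | mul x y hx _ ihx ihy =>
    rw [← commutator_eq_closure] at hx
    rw [(show Commute x y from (mem_center_iff.mp (hc hx) y).symm).mul_pow]
    exact mul_mem ihx ihy
  | inv x _ ih => rw [inv_pow]; exact inv_mem ih

theorem commutatorElement_pow_mem_zpowers (hc : commutator G ≤ center G) {r : ℕ} {a b : G}
    (h : ∀ x : G, ∃ k l : ℕ, ((x ^ r : G) : G ⧸ center G) = ((a ^ r) ^ k * (b ^ r) ^ l : G))
    (x y : G) : ⁅x, y⁆ ^ r ∈ zpowers (⁅a, b⁆ ^ r) := by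
  obtain ⟨k, l, hx⟩ := h x
  obtain ⟨k', l', hy⟩ := h y
  have hba : ⁅b, a⁆ ^ r = (⁅a, b⁆ ^ r)⁻¹ := by rw [← commutatorElement_inv, inv_pow]
  have : ⁅x, y⁆ ^ r = ((⁅a, b⁆ ^ r) ^ l') ^ k * ((⁅b, a⁆ ^ r) ^ k') ^ l := calc
    ⁅x, y⁆ ^ r = ⁅(a ^ r) ^ k * (b ^ r) ^ l, y⁆ := by
      rw [← commutatorElement_pow_left_of_le_center hc, commutatorElement_eq_of_mk_eq_left hx]
    _ = ⁅a, y ^ r⁆ ^ k * ⁅b, y ^ r⁆ ^ l := by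
      simp only [commutatorElement_mul_left_of_le_center hc,
        commutatorElement_pow_left_of_le_center hc, commutatorElement_pow_right_of_le_center hc]
    _ = ⁅a, (a ^ r) ^ k' * (b ^ r) ^ l'⁆ ^ k * ⁅b, (a ^ r) ^ k' * (b ^ r) ^ l'⁆ ^ l := by
      rw [commutatorElement_eq_of_mk_eq_right hy, commutatorElement_eq_of_mk_eq_right hy]
    _ = ((⁅a, b⁆ ^ r) ^ l') ^ k * ((⁅b, a⁆ ^ r) ^ k') ^ l := by
      simp only [commutatorElement_mul_right_of_le_center hc,
        commutatorElement_pow_right_of_le_center hc, commutatorElement_self, one_pow, one_mul,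
        mul_one]
  rw [this, hba]
  exact mul_mem (pow_mem (pow_mem (mem_zpowers _) _) _)
    (pow_mem (pow_mem (inv_mem (mem_zpowers _)) _) _)

theorem exists_pow_ne_pow_mul_pow (hc : commutator G ≤ center G) {r : ℕ}
    (h : ∀ c ∈ commutator G, ∃ g ∈ commutator G, g ^ r ∉ zpowers (c ^ r))
    (u v : G ⧸ center G) : ∃ x : G ⧸ center G, ∀ k l : ℕ, x ^ r ≠ (u ^ r) ^ k * (v ^ r) ^ l := by
  obtain ⟨a, rfl⟩ := QuotientGroup.mk_surjective u
  obtain ⟨b, rfl⟩ := QuotientGroup.mk_surjective v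
  obtain ⟨g, hg, hgr⟩ := h ⁅a, b⁆ (commutator_mem_commutator (mem_top a) (mem_top b))
  by_contra! hall
  refine hgr (pow_mem_zpowers_of_mem_commutator hc
    (commutatorElement_pow_mem_zpowers hc fun x => ?_) hg)
  obtain ⟨k, l, hkl⟩ := hall x
  exact ⟨k, l, by simpa using hkl⟩

end ClassTwo

theorem Subgroup.pow_eq_one_of_mulEquiv_zmod_prod {G : Type*} [Group G] {K : Subgroup G} {n : ℕ}
    (φ : K ≃* Multiplicative (ZMod n) × Multiplicative (ZMod n)) {g : G} (hg : g ∈ K) :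
    g ^ n = 1 := by
  have : (⟨g, hg⟩ : K) ^ n = 1 := φ.injective <| by
    rw [map_pow, map_one]
    ext <;> simp
  simpa using congrArg Subtype.val this

theorem Subgroup.exists_pow_notMem_zpowers_pow {G : Type*} [Group G] {K : Subgroup G} {n r : ℕ}
    (φ : K ≃* Multiplicative (ZMod n) × Multiplicative (ZMod n)) (hr : (r : ZMod n) ≠ 0)
    {c : G} (hc : c ∈ K) : ∃ g ∈ K, g ^ r ∉ zpowers (c ^ r) := by
  by_contra! h
  have hK : ∀ g : K, ∃ k : ℤ, (⟨c, hc⟩ ^ r : K) ^ k = g ^ r := fun g => by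
    obtain ⟨k, hk⟩ := mem_zpowers_iff.mp (h g g.2)
    exact ⟨k, Subtype.ext (by simpa using hk)⟩
  obtain ⟨k, hk⟩ := hK (φ.symm (.ofAdd 1, 1))
  obtain ⟨l, hl⟩ := hK (φ.symm (1, .ofAdd 1))
  apply_fun (fun x => ((φ x).1.toAdd, (φ x).2.toAdd)) at hk hl
  simp only [map_zpow, map_pow, MulEquiv.apply_symm_apply, Prod.ext_iff, Prod.pow_fst,
    Prod.pow_snd, toAdd_zpow, toAdd_pow, toAdd_ofAdd, toAdd_one, zsmul_eq_mul, nsmul_eq_mul,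
    mul_one, mul_zero] at hk hl
  set c₁ := (φ ⟨c, hc⟩).1.toAdd
  -- with `φ c = (c₁, c₂)`: `r = k r c₁ = k c₁ (l r c₂) = c₁ l (k r c₂) = 0`
  apply hr
  linear_combination -hk.1 - k * c₁ * hl.2 + c₁ * l * hk.2

theorem exists_mulEquiv_prod_of_linearEquiv {V : Type*} [CommGroup V] {n : ℕ}
    [Module (ZMod n) (Additive V)] {H : Submodule (ZMod n) (Additive V)}
    (e : Additive V ≃ₗ[ZMod n] ZMod n × ZMod n × ZMod n × H) :
    ∃ K : Subgroup V, Nonempty (V ≃* Multiplicative (ZMod n) × Multiplicative (ZMod n) ×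
      Multiplicative (ZMod n) × K) :=
  -- `Multiplicative` commutes with products and subtypes up to definitional equality
  ⟨H.toAddSubgroup.toSubgroup', ⟨e.toAddEquiv.toMultiplicativeRight⟩⟩

theorem stmt_16_general (p : ℕ) (hp : p.Prime) (G : Type*) [Group G]
    (h2 : commutator G ≤ Subgroup.center G) (m : ℕ) (hm : 0 < m)
    (hiso : Nonempty ((commutator G) ≃*
      (Multiplicative (ZMod (p ^ m)) × Multiplicative (ZMod (p ^ m))))) :
    ∃ H : Subgroup (G ⧸ Subgroup.center G),
      Nonempty ((G ⧸ Subgroup.center G) ≃*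
        (Multiplicative (ZMod (p ^ m)) × Multiplicative (ZMod (p ^ m)) ×
          Multiplicative (ZMod (p ^ m)) × H)) := by
  obtain ⟨φ⟩ := hiso
  have : Fact p.Prime := ⟨hp⟩
  have : NeZero (p ^ m) := ⟨pow_ne_zero _ hp.ne_zero⟩
  have : IsMulCommutative (G ⧸ center G) := Normal.quotient_commutative_iff_commutator_le.mpr h2
  let : CommGroup (G ⧸ center G) := { mul_comm := mul_comm' }
  have hexp := pow_eq_one_of_commutator_pow_eq_one h2 fun _ => pow_eq_one_of_mulEquiv_zmod_prod φ
  let : Module (ZMod (p ^ m)) (Additive (G ⧸ center G)) :=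
    AddCommGroup.zmodModule fun x => by rw [← ofMul_toMul x, ← ofMul_pow, hexp, ofMul_one]
  have hr : ((p ^ (m - 1) : ℕ) : ZMod (p ^ m)) ≠ 0 := by
    rw [Ne, ZMod.natCast_eq_zero_iff, Nat.pow_dvd_pow_iff_le_right hp.one_lt]
    omega
  obtain ⟨H, ⟨e⟩⟩ := exists_linearEquiv_zmod_cube_prod (p := p) (m := m)
    (M := Additive (G ⧸ center G)) fun x y => by
      obtain ⟨z, hz⟩ := exists_pow_ne_pow_mul_pow h2
        (fun _ => exists_pow_notMem_zpowers_pow φ hr) x.toMul y.toMul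
      refine ⟨.ofMul z, fun hmem => ?_⟩
      obtain ⟨k, l, hkl⟩ := ZMod.exists_nsmul_add_nsmul_of_mem_span_pair hmem
      exact hz k l (by simpa [pow_mul] using congrArg Additive.toMul hkl.symm)
  exact exists_mulEquiv_prod_of_linearEquiv e

/-- Let G be a finite p-group of class 2 with γ₂(G) ≅ C_{p^m} × C_{p^m} (m ≥ 1).
Then G/Z(G) ≅ C_{p^m} × C_{p^m} × C_{p^m} × H for some abelian group H
(which may be taken to be a subgroup of G/Z(G)). -/
theorem stmt_16 (p : ℕ) (hp : p.Prime) (G : Type*) [Group G] [Finite G]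
    (hG : IsPGroup p G) (h2 : commutator G ≤ Subgroup.center G) (m : ℕ) (hm : 0 < m)
    (hiso : Nonempty ((commutator G) ≃*
      (Multiplicative (ZMod (p ^ m)) × Multiplicative (ZMod (p ^ m))))) :
    ∃ H : Subgroup (G ⧸ Subgroup.center G),
      Nonempty ((G ⧸ Subgroup.center G) ≃*
        (Multiplicative (ZMod (p ^ m)) × Multiplicative (ZMod (p ^ m)) ×
          Multiplicative (ZMod (p ^ m)) × H)) :=
  stmt_16_general p hp G h2 m hm hiso
end

section
/- Let G be a finite group and suppose every automorphism of G is class preserving (Aut(G) = Aut_c(G)) and Aut(G) is an elementary abelian p-group. Then G/Z(G) is elementary abelian and Z(G) = γ₂(G) ≤ Φ(G); in particular, if additionally G is a purely non-abelian p-group with Z(G) = γ₂(G), then G is a special p-group (Z(G) = γ₂(G) = Φ(G)). -/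
/-!
Since `Inn(G) ≅ G/Z(G)` is abelian of exponent `p`, we get `G' ≤ Z(G)` and `g ^ p ∈ Z(G)`, hence
`[g, h] ^ p = [g ^ p, h] = 1`: the derived subgroup `G'` is central of exponent `p`.

Everything else comes from central automorphisms `x ↦ x * w ^ χ(x)`, where `w` is central with
`w ^ N = 1` and `χ : G/G' → ℤ/N` is a character. Such a map is an automorphism as soon as
`1 + χ(w)` is a unit, and when it is class preserving, `a ~ a * w` for any `a` with `χ(a) = 1`,
so `w ∈ G'` (and `w = 1` if `a` is central). A character of `G/G'` taking the value `1` exists at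
any element whose order is the exponent of `G/G'`. Three choices of `(χ, w)` show in turn:
* `G/G'` has exponent `p`: otherwise take `ā` of order `p ^ k`, `k ≥ 2`, and
  `w = a ^ p ^ (k - 1)`, which is central with `χ(w) = p ^ (k - 1)` nilpotent mod `p ^ k`;
* `Z(G)` has exponent `p`: for `z ∈ Z(G) \ G'` take `χ(z) = 1` and `w = z ^ p ∈ G'`;
* `Z(G) ≤ G'`: `G/G'` is not cyclic as `G` is non-abelian, so for `z ∈ Z(G) \ G'` there is a
  character with `χ(z) = 0` and `χ(u) = 1` for some `u`; take `w = z`.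

Finally `Φ(G) = G'`: every maximal subgroup contains the central subgroup `G'`, and since `G/G'` is
elementary abelian, every element outside `G'` lies outside the kernel of some character onto
`ℤ/p`, a maximal subgroup.
-/

open Subgroup
open scoped commutatorElement

theorem CommGroup.exists_monoidHom_zmod_apply_eq_ofAdd_one {A : Type*} [CommGroup A] [Finite A]
    {N : ℕ} (hA : ∀ x : A, x ^ N = 1) {a : A} (ha : orderOf a = N) :
    ∃ χ : A →* Multiplicative (ZMod N), χ a = Multiplicative.ofAdd 1 := by
  have : NeZero N := ⟨(ha ▸ orderOf_pos a).ne'⟩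
  -- `ℤ/N` has enough `N`-th roots of unity, so the isomorphism `⟨a⟩ ≃ ℤ/N` extends to `A`.
  let M := Multiplicative (ZMod N)
  have : HasEnoughRootsOfUnity M (Monoid.exponent A) :=
    have : HasEnoughRootsOfUnity M N :=
      { prim := ⟨_, IsPrimitiveRoot.iff_orderOf.mpr <| by
          rw [orderOf_ofAdd_eq_addOrderOf, ZMod.addOrderOf_one]⟩
        cyc := have : IsCyclic Mˣ := isCyclic_of_surjective _ toUnits.surjective
          inferInstance }
    .of_dvd M (Monoid.exponent_dvd_of_forall_pow_eq_one hA)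
  let e : M ≃* zpowers a := zmodMulEquivOfGenerator (g := ⟨a, mem_zpowers a⟩)
    (fun ⟨_, k, hk⟩ => ⟨k, Subtype.ext (by simpa using hk)⟩) (by rw [Nat.card_zpowers, ha])
  obtain ⟨ψ, hψ⟩ := MonoidHom.domRestrict_surjective (M := M) (zpowers a)
    ((toUnits : M ≃* Mˣ).toMonoidHom.comp e.symm.toMonoidHom)
  refine ⟨toUnits.symm.toMonoidHom.comp ψ, ?_⟩
  have : ψ a = toUnits (e.symm ⟨a, mem_zpowers a⟩) := DFunLike.congr_fun hψ ⟨a, mem_zpowers a⟩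
  simp [this, MulEquiv.symm_apply_eq, e]

theorem ZMod.isUnit_one_add_of_dvd_sq {N d : ℕ} (h : N ∣ d ^ 2) : IsUnit (1 + (d : ZMod N)) :=
  IsNilpotent.isUnit_one_add ⟨2, by exact_mod_cast (ZMod.natCast_eq_zero_iff _ _).mpr h⟩

theorem Abelianization.of_surjective {G : Type*} [Group G] :
    Function.Surjective (Abelianization.of : G →* Abelianization G) :=
  QuotientGroup.mk_surjective

theorem Abelianization.of_eq_one_iff {G : Type*} [Group G] {g : G} :
    Abelianization.of g = 1 ↔ g ∈ commutator G := by
  rw [← MonoidHom.mem_ker, Abelianization.ker_of]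

theorem Abelianization.pow_eq_one_of_pow_mem_commutator {G : Type*} [Group G] {n : ℕ}
    (h : ∀ g : G, g ^ n ∈ commutator G) (x : Abelianization G) : x ^ n = 1 := by
  obtain ⟨g, rfl⟩ := Abelianization.of_surjective x
  rw [← map_pow, Abelianization.of_eq_one_iff]
  exact h g

section Commutators

variable {G : Type*} [Group G]

theorem mem_center_of_conj_eq_one {z : G} (h : MulAut.conj z = 1) : z ∈ center G :=
  mem_center_iff.mpr fun g => by
    have hg : z * g * z⁻¹ = g := DFunLike.congr_fun h g
    exact (mul_inv_eq_iff_eq_mul.mp hg).symm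

theorem commutator_le_center_of_commute_conj
    (h : ∀ g k : G, Commute (MulAut.conj g) (MulAut.conj k)) : commutator G ≤ center G := by
  rw [commutator_def, commutator_le]
  intro g _ k _
  apply mem_center_of_conj_eq_one
  rw [map_commutatorElement, commutatorElement_eq_one_iff_commute]
  exact h g k

theorem commutatorElement_pow_left (hG : commutator G ≤ center G) (g k : G) (n : ℕ) :
    ⁅g ^ n, k⁆ = ⁅g, k⁆ ^ n := by
  induction n with
  | zero => simp
  | succ n ih =>
    have hc : ⁅g ^ n, k⁆ ∈ center G := hG (commutator_mem_commutator (mem_top _) (mem_top _))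
    rw [pow_succ', commutatorElement_mul_left_eq_conj_mul, mul_assoc g,
      ← mem_center_iff.mp hc g⁻¹, mul_inv_cancel_left, ih, pow_succ]

theorem pow_eq_one_of_mem_commutator (hG : commutator G ≤ center G) {n : ℕ}
    (hn : ∀ g : G, g ^ n ∈ center G) {c : G} (hc : c ∈ commutator G) : c ^ n = 1 := by
  rw [commutator_eq_closure] at hc
  induction hc using closure_induction with
  | mem _ h =>
    obtain ⟨g, k, rfl⟩ := h
    rw [← commutatorElement_pow_left hG, commutatorElement_eq_one_iff_commute]
    exact (mem_center_iff.mp (hn g) k).symm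
  | one => exact one_pow n
  | mul x y hx _ ihx ihy =>
    rw [← commutator_eq_closure] at hx
    rw [(show Commute x y from (mem_center_iff.mp (hG hx) y).symm).mul_pow, ihx, ihy, one_mul]
  | inv x _ ih => rw [inv_pow, ih, inv_one]

theorem commutator_le_of_isCoatom (hG : commutator G ≤ center G) {M : Subgroup G}
    (hM : IsCoatom M) : commutator G ≤ M := by
  by_cases hZ : center G ≤ M
  · exact hG.trans hZ
  have hsup : M ⊔ center G = ⊤ := hM.2 _ (left_lt_sup.mpr hZ)
  have hmem (g : G) : ∃ m ∈ M, ∃ z ∈ center G, m * z = g :=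
    mem_sup_of_normal_right.mp (hsup ▸ mem_top g)
  rw [commutator_def, commutator_le]
  intro g _ k _
  obtain ⟨m₁, hm₁, z₁, hz₁, rfl⟩ := hmem g
  obtain ⟨m₂, hm₂, z₂, hz₂, rfl⟩ := hmem k
  have hz₁' : ⁅z₁, m₂ * z₂⁆ = 1 :=
    commutatorElement_eq_one_iff_commute.mpr (mem_center_iff.mp hz₁ _).symm
  have hz₂' : ⁅m₁, z₂⁆ = 1 :=
    commutatorElement_eq_one_iff_commute.mpr (mem_center_iff.mp hz₂ _)
  rw [commutatorElement_mul_left_eq_conj_mul, hz₁', commutatorElement_mul_right_eq_mul_conj, hz₂']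
  simp only [mul_one, mul_inv_cancel, one_mul, mul_inv_cancel_right, commutatorElement_def]
  exact mul_mem (mul_mem (mul_mem hm₁ hm₂) (inv_mem hm₁)) (inv_mem hm₂)

theorem commutator_le_frattini (hG : commutator G ≤ center G) : commutator G ≤ frattini G :=
  le_iInf₂ fun _ hM => commutator_le_of_isCoatom hG hM

end Commutators

section CentralAutomorphisms

variable {G : Type*} [Group G]

def zmodPowHom {N : ℕ} [NeZero N] (w : G) (hw : w ^ N = 1) : Multiplicative (ZMod N) →* G where
  toFun j := w ^ j.toAdd.val
  map_one' := by simp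
  map_mul' i j := by
    rw [toAdd_mul, ZMod.val_add, ← pow_eq_pow_mod _ hw, pow_add]

variable {N : ℕ} [NeZero N] {w : G} (hw : w ^ N = 1)

theorem zmodPowHom_apply (j : Multiplicative (ZMod N)) : zmodPowHom w hw j = w ^ j.toAdd.val :=
  rfl

theorem zmodPowHom_ofAdd_one : zmodPowHom w hw (Multiplicative.ofAdd 1) = w := by
  rw [zmodPowHom_apply, toAdd_ofAdd, ZMod.val_one_eq_one_mod, ← pow_eq_pow_mod _ hw, pow_one]

theorem exists_mulAut_apply_eq_mul [Finite G] (f : G →* G) (hf : ∀ x, f x ∈ center G)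
    (hinj : ∀ x, x * f x = 1 → x = 1) : ∃ φ : MulAut G, ∀ x, φ x = x * f x := by
  let φ : G →* G :=
    { toFun x := x * f x
      map_one' := by simp
      map_mul' x y := by
        rw [map_mul, mul_assoc x, ← mul_assoc y, mem_center_iff.mp (hf x) y]
        simp only [mul_assoc] }
  have hφ : Function.Injective φ := (injective_iff_map_eq_one φ).mpr hinj
  exact ⟨MulEquiv.ofBijective φ (Finite.injective_iff_bijective.mp hφ), fun _ => rfl⟩

theorem exists_mulAut_apply_eq_mul_zmodPowHom [Finite G] (χ : G →* Multiplicative (ZMod N))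
    (hwZ : w ∈ center G) (hunit : IsUnit (1 + (χ w).toAdd)) :
    ∃ φ : MulAut G, ∀ x, φ x = x * zmodPowHom w hw (χ x) := by
  refine exists_mulAut_apply_eq_mul ((zmodPowHom w hw).comp χ)
    (fun x => pow_mem hwZ _) fun x hx => ?_
  have hχx : (χ x).toAdd * (1 + (χ w).toAdd) = 0 := by
    have := congrArg (Multiplicative.toAdd ∘ χ) hx
    simp only [Function.comp_apply, MonoidHom.coe_comp, zmodPowHom_apply, map_mul, map_pow,
      toAdd_mul, toAdd_pow, nsmul_eq_mul, ZMod.natCast_zmod_val, map_one, toAdd_one] at this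
    linear_combination this
  have hχx0 : (χ x).toAdd = 0 := hunit.mul_left_eq_zero.mp hχx
  simpa [zmodPowHom_apply, hχx0] using hx

end CentralAutomorphisms

theorem mem_commutator_of_isConj_mul {G : Type*} [Group G] {x c : G} (h : IsConj x (x * c)) :
    c ∈ commutator G := by
  obtain ⟨g, hg⟩ := isConj_iff.mp h
  have hc : c = ⁅x⁻¹, g⁆ := by
    rw [commutatorElement_def, inv_inv, ← mul_right_inj x, ← hg]
    group
  exact hc ▸ commutator_mem_commutator (mem_top _) (mem_top _)

theorem eq_one_of_isConj_mul {G : Type*} [Group G] {z c : G} (hz : z ∈ center G)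
    (h : IsConj z (z * c)) : c = 1 := by
  obtain ⟨g, hg⟩ := isConj_iff.mp h
  rwa [mem_center_iff.mp hz g, mul_inv_cancel_right, left_eq_mul] at hg

def MulAut.IsClassPreserving {G : Type*} [Group G] (φ : MulAut G) : Prop :=
  ∀ x, IsConj x (φ x)

section PrimeExponent

variable {p : ℕ} [hp : Fact p.Prime] {G : Type*} [Group G] [Finite G]

theorem exists_monoidHom_zmod_apply_eq_ofAdd_one_of_notMem_commutator
    (hpG' : ∀ g : G, g ^ p ∈ commutator G) {x : G} (hx : x ∉ commutator G) :
    ∃ χ : G →* Multiplicative (ZMod p), χ x = Multiplicative.ofAdd 1 := by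
  have hA := Abelianization.pow_eq_one_of_pow_mem_commutator hpG'
  obtain ⟨χ, hχ⟩ := CommGroup.exists_monoidHom_zmod_apply_eq_ofAdd_one hA
    (orderOf_eq_prime (hA _) (by rwa [Ne, Abelianization.of_eq_one_iff]))
  exact ⟨χ.comp Abelianization.of, hχ⟩

theorem isConj_mul_of_forall_isClassPreserving (hclass : ∀ φ : MulAut G, φ.IsClassPreserving)
    {N : ℕ} [NeZero N] (χ : G →* Multiplicative (ZMod N))
    {a w : G} (ha : χ a = Multiplicative.ofAdd 1) (hwZ : w ∈ center G) (hw : w ^ N = 1)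
    (hunit : IsUnit (1 + (χ w).toAdd)) : IsConj a (a * w) := by
  obtain ⟨φ, hφ⟩ := exists_mulAut_apply_eq_mul_zmodPowHom hw χ hwZ hunit
  simpa [hφ, ha, zmodPowHom_ofAdd_one] using hclass φ a

theorem pow_mem_commutator_of_forall_isClassPreserving
    (hclass : ∀ φ : MulAut G, φ.IsClassPreserving) (hG : IsPGroup p G)
    (hGZ : commutator G ≤ center G) (hpZ : ∀ g : G, g ^ p ∈ center G) (g : G) :
    g ^ p ∈ commutator G := by
  obtain ⟨k, hk⟩ := (hG.of_surjective _ Abelianization.of_surjective).exists_exponent_eq_pow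
  have hA (x : Abelianization G) : x ^ p ^ k = 1 := hk ▸ Monoid.pow_exponent_eq_one x
  rw [← Abelianization.of_eq_one_iff, map_pow]
  by_cases hk1 : k ≤ 1
  · exact Monoid.exponent_dvd_iff_forall_pow_eq_one.mp
      (hk ▸ pow_dvd_pow p hk1 |>.trans (pow_one p).dvd) _
  obtain ⟨j, rfl⟩ : ∃ j, k = j + 2 := ⟨k - 2, by omega⟩
  obtain ⟨ā, hā⟩ := Monoid.exists_orderOf_eq_exponent (G := Abelianization G) .of_finite
  rw [hk] at hā
  obtain ⟨a, rfl⟩ := Abelianization.of_surjective ā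
  obtain ⟨χ, hχ⟩ := CommGroup.exists_monoidHom_zmod_apply_eq_ofAdd_one hA hā
  have : NeZero (p ^ (j + 2)) := ⟨pow_ne_zero _ hp.out.ne_zero⟩
  set w := a ^ p ^ (j + 1) with hw
  have hwZ : w ∈ center G := by
    rw [hw, pow_succ', pow_mul]
    exact pow_mem (hpZ a) _
  have hwN : w ^ p ^ (j + 2) = 1 := by
    have haN : a ^ p ^ (j + 2) ∈ commutator G := by
      rw [← Abelianization.of_eq_one_iff, map_pow, hA]
    rw [hw, ← pow_mul, show p ^ (j + 1) * p ^ (j + 2) = p ^ (j + 2) * p * p ^ j by ring,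
      pow_mul, pow_mul, pow_eq_one_of_mem_commutator hGZ hpZ haN, one_pow]
  have hunit : IsUnit (1 + ((χ.comp Abelianization.of) w).toAdd) := by
    have hχw : ((χ.comp Abelianization.of) w).toAdd = ((p ^ (j + 1) : ℕ) : ZMod (p ^ (j + 2))) := by
      simp [hw, hχ]
    rw [hχw]
    exact ZMod.isUnit_one_add_of_dvd_sq (by rw [← pow_mul]; exact pow_dvd_pow p (by omega))
  have hwC := mem_commutator_of_isConj_mul
    (isConj_mul_of_forall_isClassPreserving hclass (χ.comp Abelianization.of) hχ hwZ hwN hunit)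
  rw [← Abelianization.of_eq_one_iff, hw, map_pow] at hwC
  have := hā ▸ orderOf_dvd_of_pow_eq_one hwC
  exact absurd ((Nat.pow_dvd_pow_iff_le_right hp.out.one_lt).mp this) (by omega)

theorem pow_eq_one_of_mem_center_of_forall_isClassPreserving
    (hclass : ∀ φ : MulAut G, φ.IsClassPreserving) (hGZ : commutator G ≤ center G)
    (hpG' : ∀ g : G, g ^ p ∈ commutator G) {z : G} (hz : z ∈ center G) : z ^ p = 1 := by
  have hpZ (g : G) : g ^ p ∈ center G := hGZ (hpG' g)
  by_contra hzp
  obtain ⟨χ, hχ⟩ := exists_monoidHom_zmod_apply_eq_ofAdd_one_of_notMem_commutator hpG'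
    fun hzC => hzp (pow_eq_one_of_mem_commutator hGZ hpZ hzC)
  have hunit : IsUnit (1 + (χ (z ^ p)).toAdd) := by simp [hχ]
  exact hzp <| eq_one_of_isConj_mul hz <| isConj_mul_of_forall_isClassPreserving hclass χ hχ
    (pow_mem hz p) (pow_eq_one_of_mem_commutator hGZ hpZ (hpG' z)) hunit

theorem center_le_commutator_of_forall_isClassPreserving
    (hclass : ∀ φ : MulAut G, φ.IsClassPreserving) (hna : ∃ a b : G, a * b ≠ b * a)
    (hGZ : commutator G ≤ center G) (hpG' : ∀ g : G, g ^ p ∈ commutator G)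
    (hZp : ∀ z ∈ center G, z ^ p = 1) : center G ≤ commutator G := by
  intro z hz
  by_contra hzC
  obtain ⟨u, hu⟩ : ∃ u, u ∉ zpowers (Abelianization.of z) := by
    by_contra! h
    have : IsCyclic (Abelianization G) := ⟨⟨_, h⟩⟩
    obtain ⟨a, b, hab⟩ := hna
    exact hab ((Abelianization.of.isMulCommutative_of_isCyclic_of_ker_le_center
      (Abelianization.ker_of (G := G) ▸ hGZ)).is_comm.comm a b)
  let π := (QuotientGroup.mk' (zpowers (Abelianization.of z))).comp Abelianization.of
  have hπ : Function.Surjective π :=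
    (QuotientGroup.mk'_surjective _).comp Abelianization.of_surjective
  obtain ⟨u, rfl⟩ := Abelianization.of_surjective u
  have hA (x : Abelianization G ⧸ zpowers (Abelianization.of z)) : x ^ p = 1 := by
    obtain ⟨g, rfl⟩ := hπ x
    rw [← map_pow, MonoidHom.comp_apply, Abelianization.of_eq_one_iff.mpr (hpG' g), map_one]
  have hu1 : orderOf (π u) = p :=
    orderOf_eq_prime (hA _) (by rwa [Ne, MonoidHom.comp_apply, QuotientGroup.mk'_apply,
      QuotientGroup.eq_one_iff])
  obtain ⟨χ, hχ⟩ := CommGroup.exists_monoidHom_zmod_apply_eq_ofAdd_one hA hu1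
  have hχz : (χ.comp π) z = 1 := by
    simp [π, (QuotientGroup.eq_one_iff _).mpr (mem_zpowers (Abelianization.of z))]
  have hunit : IsUnit (1 + ((χ.comp π) z).toAdd) := by simp [hχz]
  exact hzC <| mem_commutator_of_isConj_mul <|
    isConj_mul_of_forall_isClassPreserving hclass (χ.comp π) hχ hz (hZp z hz) hunit


theorem frattini_le_commutator (hpG' : ∀ g : G, g ^ p ∈ commutator G) :
    frattini G ≤ commutator G := by
  intro x hx
  by_contra hxC
  obtain ⟨χ, hχ⟩ := exists_monoidHom_zmod_apply_eq_ofAdd_one_of_notMem_commutator hpG' hxC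
  have hsurj : Function.Surjective χ := fun y =>
    ⟨x ^ y.toAdd.val, by
      rw [map_pow, hχ, ← ofAdd_nsmul, nsmul_one, ZMod.natCast_zmod_val, ofAdd_toAdd]⟩
  have : IsSimpleGroup (Multiplicative (ZMod p)) := isSimpleGroup_of_prime_card
    (by rw [Nat.card_eq_fintype_card, Fintype.card_multiplicative, ZMod.card])
  have hM : IsCoatom χ.ker := by
    rw [← MonoidHom.comap_bot]
    exact isCoatom_comap_of_surjective hsurj isCoatom_bot
  have := frattini_le_coatom hM hx
  rw [MonoidHom.mem_ker, hχ] at this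
  exact one_ne_zero (ofAdd_eq_one.mp this)

end PrimeExponent

/-- Let G be a finite non-abelian p-group all of whose automorphisms are class
preserving, with Aut(G) an elementary abelian p-group. Then G/Z(G) is elementary
abelian and Z(G) = γ₂(G) ≤ Φ(G); in particular, if additionally G is purely
non-abelian (with Z(G) = γ₂(G)), then G is a special p-group: Z(G) = γ₂(G) = Φ(G). -/
theorem stmt_17 (p : ℕ) (hp : p.Prime) (G : Type*) [Group G] [Finite G]
    (hG : IsPGroup p G) (hna : ∃ a b : G, a * b ≠ b * a)
    (hclass : ∀ (φ : MulAut G) (x : G), IsConj x (φ x))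
    (habel : ∀ φ ψ : MulAut G, Commute φ ψ)
    (hexp : ∀ φ : MulAut G, φ ^ p = 1) :
    (∀ q : G ⧸ Subgroup.center G, q ^ p = 1) ∧
      commutator G ≤ Subgroup.center G ∧
      Subgroup.center G = commutator G ∧
      Subgroup.center G ≤ frattini G ∧
      ((¬∃ H K : Subgroup G, H.Normal ∧ K.Normal ∧ K ≠ ⊥ ∧
          (∀ a ∈ K, ∀ b ∈ K, Commute a b) ∧ H ⊓ K = ⊥ ∧ H ⊔ K = ⊤) →
        Subgroup.center G = frattini G ∧ commutator G = frattini G) := by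
  have : Fact p.Prime := ⟨hp⟩
  have hpZ (g : G) : g ^ p ∈ center G := mem_center_of_conj_eq_one (by rw [map_pow, hexp])
  have hGZ : commutator G ≤ center G := commutator_le_center_of_commute_conj fun _ _ => habel _ _
  have hpG' := pow_mem_commutator_of_forall_isClassPreserving hclass hG hGZ hpZ
  have hZG' : center G = commutator G := le_antisymm
    (center_le_commutator_of_forall_isClassPreserving hclass hna hGZ hpG'
      fun _ => pow_eq_one_of_mem_center_of_forall_isClassPreserving hclass hGZ hpG')
    hGZ
  have hG'Φ : commutator G ≤ frattini G := commutator_le_frattini hGZ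
  have hΦG' : frattini G ≤ commutator G := frattini_le_commutator hpG'
  refine ⟨fun q => ?_, hGZ, hZG', hZG' ▸ hG'Φ, fun _ => ⟨?_, le_antisymm hG'Φ hΦG'⟩⟩
  · obtain ⟨g, rfl⟩ := QuotientGroup.mk_surjective q
    rw [← QuotientGroup.mk_pow, QuotientGroup.eq_one_iff]
    exact hpZ g
  · exact hZG' ▸ le_antisymm hG'Φ hΦG'
end
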